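/- Consistency follows throughout a transitive closure set: let I be a type of clients, each client C holding a partial sequence P_C, and assume the comparability property that for every client C and all messages t, u ∈ P_C with seq t ≤ seq u, t is in the path of u. Fix n ≥ 1. Call two clients C and D adjacent if there is a message m ∈ P_C ∩ P_D with seq m > n, and let S be a set of clients such that any two clients of S are joined by a finite chain of adjacent clients within S, and such that some client of S holds a message of sequence number > n. Then there exists a total sequence T of length n such that for every client C ∈ S, the partial sequence P_C is consistent with T. -/

import Mathlib

/-- Iterate the parent map `n` times (in `Option`). -/
def parentIter {M : Type*} (parent : M → Option M) : ℕ → M → Option M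
  | 0, m => some m
  | n + 1, m => (parent m).bind (parentIter parent n)

/-- `p` is in the path of `u`. -/
def InPath {M : Type*} (seq : M → ℕ) (parent : M → Option M) (p u : M) : Prop :=
  seq p ≤ seq u ∧ parentIter parent (seq u - seq p) u = some p

/-- `L = (t_1, …, t_n)` is a total sequence (of length `L.length`). -/
def IsTotalSeq {M : Type*} (seq : M → ℕ) (parent : M → Option M) (L : List M) : Prop :=
  (∀ (i : ℕ) (h : i < L.length), seq L[i] = i + 1) ∧
  (∀ (i : ℕ) (h : i + 1 < L.length), parent L[i + 1] = some (L[i]'(by omega)))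

/-- A finite set of messages is a partial sequence if no two have the same seq number. -/
def IsPartialSeq {M : Type*} (seq : M → ℕ) (P : Finset M) : Prop :=
  ∀ p ∈ P, ∀ q ∈ P, seq p = seq q → p = q

/-- A partial sequence `P` is consistent with a total sequence `T`. -/
def ConsistentWith {M : Type*} (seq : M → ℕ) (P : Finset M) (T : List M) : Prop :=
  ∀ p ∈ P, seq p ≤ T.length → T[seq p - 1]? = some p

/-!
Every message `m` with `n ≤ seq m` determines a total sequence of length `n`: its ancestors with
sequence numbers `1, …, n`. Within one client, two messages of sequence number at least `n` are
comparable, so they share these ancestors; an adjacency step shares a message of sequence number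
`> n` between two clients. Hence along every chain inside `S` the high messages all determine the
same total sequence `T`, and any message `p` with `seq p ≤ n` of a client is in the path of a high
message of that client, i.e. `p` is the entry of `T` at `seq p`.
-/

section Ancestors

variable {M : Type*} {seq : M → ℕ} {parent : M → Option M}

theorem parentIter_add (a b : ℕ) (m : M) :
    parentIter parent (a + b) m = (parentIter parent a m).bind (parentIter parent b) := by
  induction a generalizing m with
  | zero => simp [parentIter]
  | succ a ih =>
    rw [Nat.add_right_comm]
    cases hp : parent m <;> simp [parentIter, hp, ih]

theorem parentIter_succ' (k : ℕ) (m : M) :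
    parentIter parent (k + 1) m = (parentIter parent k m).bind parent := by
  rw [parentIter_add]
  congr 1
  funext x
  simp [parentIter]

theorem seq_eq_of_parentIter_eq_some (hpar : ∀ x p, parent x = some p → seq x = seq p + 1)
    {k : ℕ} {m p : M} (h : parentIter parent k m = some p) : seq m = seq p + k := by
  induction k generalizing m with
  | zero => cases h; rfl
  | succ k ih =>
    cases hq : parent m with
    | none => simp [parentIter, hq] at h
    | some q =>
      simp only [parentIter, hq, Option.bind_some] at h
      rw [hpar m q hq, ih h]
      omega

theorem isSome_parentIter (hpar : ∀ x p, parent x = some p → seq x = seq p + 1)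
    (hroot : ∀ x, parent x = none → seq x = 1) {k : ℕ} {m : M} (hk : k < seq m) :
    (parentIter parent k m).isSome := by
  induction k generalizing m with
  | zero => rfl
  | succ k ih =>
    cases hq : parent m with
    | none => have := hroot m hq; omega
    | some q =>
      have := hpar m q hq
      simpa [parentIter, hq] using ih (m := q) (by omega)

variable (seq parent) in
/-- The ancestor of `u` with sequence number `k`. Meaningful only for `k ≤ seq u`: for larger `k`
the truncated subtraction makes it `some u`. -/
def ancestor (u : M) (k : ℕ) : Option M :=
  parentIter parent (seq u - k) u

theorem InPath.ancestor_eq {w u : M} (h : InPath seq parent w u) {k : ℕ} (hk : k ≤ seq w) :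
    ancestor seq parent u k = ancestor seq parent w k := by
  obtain ⟨hwu, hiter⟩ := h
  rw [ancestor, show seq u - k = (seq u - seq w) + (seq w - k) by omega, parentIter_add, hiter,
    Option.bind_some, ancestor]

theorem ancestor_eq_of_comparable {P : Set M}
    (hP : ∀ t ∈ P, ∀ u ∈ P, seq t ≤ seq u → InPath seq parent t u)
    {t u : M} (ht : t ∈ P) (hu : u ∈ P) {k : ℕ} (hkt : k ≤ seq t) (hku : k ≤ seq u) :
    ancestor seq parent t k = ancestor seq parent u k := by
  rcases le_total (seq t) (seq u) with htu | hut
  · exact ((hP t ht u hu htu).ancestor_eq hkt).symm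
  · exact (hP u hu t ht hut).ancestor_eq hku

end Ancestors

section PathPrefix

variable {M : Type*} {seq : M → ℕ} {parent : M → Option M}

variable (seq parent) in
def IsPathPrefix (T : List M) (u : M) : Prop :=
  T.length ≤ seq u ∧ ∀ (i : ℕ) (h : i < T.length), ancestor seq parent u (i + 1) = some T[i]

theorem exists_isTotalSeq_isPathPrefix (hpar : ∀ x p, parent x = some p → seq x = seq p + 1)
    (hroot : ∀ x, parent x = none → seq x = 1) {n : ℕ} {m : M} (hn : n ≤ seq m) :
    ∃ T : List M, IsTotalSeq seq parent T ∧ T.length = n ∧ IsPathPrefix seq parent T m := by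
  have hsome (i : Fin n) : (ancestor seq parent m (i + 1)).isSome :=
    isSome_parentIter hpar hroot (by omega)
  set f : Fin n → M := fun i => (ancestor seq parent m (i + 1)).get (hsome i)
  have hf (i : Fin n) : ancestor seq parent m (i + 1) = some (f i) := by simp [f]
  refine ⟨List.ofFn f, ⟨fun i hi => ?_, fun i hi => ?_⟩, List.length_ofFn, ?_, fun i hi => ?_⟩
  · rw [List.length_ofFn] at hi
    have := seq_eq_of_parentIter_eq_some hpar (hf ⟨i, hi⟩)
    simp only [List.getElem_ofFn] at this ⊢
    omega
  · rw [List.length_ofFn] at hi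
    have hstep := hf ⟨i, by omega⟩
    rw [ancestor, show seq m - (i + 1) = seq m - (i + 1 + 1) + 1 by omega, parentIter_succ',
      ← ancestor, hf ⟨i + 1, hi⟩, Option.bind_some] at hstep
    simpa only [List.getElem_ofFn] using hstep
  · simpa using hn
  · simpa using hf ⟨i, by simpa using hi⟩

theorem IsPathPrefix.of_comparable {P : Set M}
    (hP : ∀ t ∈ P, ∀ u ∈ P, seq t ≤ seq u → InPath seq parent t u)
    {T : List M} {t u : M} (ht : t ∈ P) (hu : u ∈ P) (hT : IsPathPrefix seq parent T t)
    (hlen : T.length ≤ seq u) : IsPathPrefix seq parent T u :=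
  ⟨hlen, fun i hi => by
    rw [← hT.2 i hi, ancestor_eq_of_comparable hP hu ht (by omega) (by have := hT.1; omega)]⟩

theorem IsPathPrefix.consistentWith (hseq : ∀ m, 1 ≤ seq m) {T : List M} {u : M}
    (hT : IsPathPrefix seq parent T u) {Q : Finset M}
    (hQ : ∀ p ∈ Q, seq p ≤ seq u → InPath seq parent p u) : ConsistentWith seq Q T := by
  intro p hp hpT
  have hi : seq p - 1 < T.length := by have := hseq p; omega
  have hanc := hT.2 _ hi
  rw [Nat.sub_add_cancel (hseq p), ancestor, (hQ p hp (hpT.trans hT.1)).2] at hanc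
  rw [List.getElem?_eq_getElem hi, hanc]

end PathPrefix

theorem transitive_closure_consistent_general {M : Type*} (seq : M → ℕ) (parent : M → Option M)
    (hseq : ∀ m, 1 ≤ seq m)
    (hpar : ∀ x p, parent x = some p → seq x = seq p + 1)
    (hnone : ∀ x, parent x = none ↔ seq x = 1)
    {I : Type*} (P : I → Finset M)
    (hcomp : ∀ C, ∀ t ∈ P C, ∀ u ∈ P C, seq t ≤ seq u → InPath seq parent t u)
    (n : ℕ)
    (S : Set I)
    (hchain : ∀ C ∈ S, ∀ D ∈ S,
      Relation.ReflTransGen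
        (fun A B => A ∈ S ∧ B ∈ S ∧ ∃ m, m ∈ P A ∧ m ∈ P B ∧ n < seq m) C D)
    (hsome : ∃ C ∈ S, ∃ m ∈ P C, n < seq m) :
    ∃ T : List M, IsTotalSeq seq parent T ∧ T.length = n ∧
      ∀ C ∈ S, ConsistentWith seq (P C) T := by
  obtain ⟨C₀, hC₀, m₀, hm₀, hnm₀⟩ := hsome
  obtain ⟨T, hT, hlen, hTm₀⟩ :=
    exists_isTotalSeq_isPathPrefix hpar (fun x => (hnone x).1) hnm₀.le
  refine ⟨T, hT, hlen, fun D hD => ?_⟩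
  have hprefix : ∃ u ∈ P D, IsPathPrefix seq parent T u := by
    induction hchain C₀ hC₀ D hD with
    | refl => exact ⟨m₀, hm₀, hTm₀⟩
    | tail _ hBD ih =>
      obtain ⟨hB, -, m, hmB, hmD, hnm⟩ := hBD
      obtain ⟨u, huB, hTu⟩ := ih hB
      exact ⟨m, hmD, hTu.of_comparable (hcomp _) huB hmB (hlen ▸ hnm.le)⟩
  obtain ⟨u, hu, hTu⟩ := hprefix
  exact hTu.consistentWith hseq fun p hp hpu => hcomp D p hp u hu hpu

/-- Consistency follows throughout a transitive closure set. -/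
theorem transitive_closure_consistent {M : Type*} (seq : M → ℕ) (parent : M → Option M)
    (hseq : ∀ m, 1 ≤ seq m)
    (hpar : ∀ x p, parent x = some p → seq x = seq p + 1)
    (hnone : ∀ x, parent x = none ↔ seq x = 1)
    {I : Type*} (P : I → Finset M)
    (hpartial : ∀ C, IsPartialSeq seq (P C))
    (hcomp : ∀ C, ∀ t ∈ P C, ∀ u ∈ P C, seq t ≤ seq u → InPath seq parent t u)
    (n : ℕ) (hn : 1 ≤ n)
    (S : Set I)
    (hchain : ∀ C ∈ S, ∀ D ∈ S,
      Relation.ReflTransGen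
        (fun A B => A ∈ S ∧ B ∈ S ∧ ∃ m, m ∈ P A ∧ m ∈ P B ∧ n < seq m) C D)
    (hsome : ∃ C ∈ S, ∃ m ∈ P C, n < seq m) :
    ∃ T : List M, IsTotalSeq seq parent T ∧ T.length = n ∧
      ∀ C ∈ S, ConsistentWith seq (P C) T :=
  transitive_closure_consistent_general seq parent hseq hpar hnone P hcomp n S hchain hsome
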